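/- arXiv:math/0301379 — 2 statements merged into one kernel-verified Lean document; each statement's English description precedes it below -/
import Mathlib

section
/- Let 1 < a ≤ 2 and M > 0. Let v : [0,1] → ℝ be Hölder continuous with exponent a − 1 and constant M, i.e., |v(x) − v(y)| ≤ M|x − y|^{a−1} for all x, y ∈ [0,1], and let g(x) := ∫_0^x v(s) ds. Let c > 0, let δ > 0 be small enough that h := c·δ^{1/a} satisfies 0 < h ≤ 1/2, and let g_δ : [0,1] → ℝ satisfy sup_{x ∈ [0,1]} |g_δ(x) − g(x)| ≤ δ. Define R_h g_δ(x) := (g_δ(x+h) − g_δ(x−h))/(2h) for h ≤ x ≤ 1 − h, R_h g_δ(x) := (g_δ(x+h) − g_δ(x))/h for 0 ≤ x < h, and R_h g_δ(x) := (g_δ(x) − g_δ(x−h))/h for 1 − h < x ≤ 1. Then sup_{x ∈ [0,1]} |R_h g_δ(x) − v(x)| ≤ 2δ/h + M·h^{a−1} = (2/c + M·c^{a−1})·δ^{1−1/a}, which tends to 0 as δ → 0. -/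
open intervalIntegral Real Set Filter

/-- **Stable numerical differentiation (estimate (2.4)).** Let `1 < a ≤ 2`, `M > 0`,
`v` Hölder with exponent `a - 1` and constant `M` on `[0,1]`, `g x = ∫_0^x v`.
Let `c > 0`, `δ > 0`, `h = c·δ^(1/a)` with `0 < h ≤ 1/2`, and `‖gδ - g‖_∞ ≤ δ` on `[0,1]`.
Then the divided-difference regularizer `R` of (2.2) satisfies
`sup_{[0,1]} |R gδ - v| ≤ 2δ/h + M·h^(a-1) = (2/c + M·c^(a-1))·δ^(1-1/a) → 0`. -/
theorem numerical_differentiation_regularizer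
    (a M : ℝ) (ha1 : 1 < a) (ha2 : a ≤ 2) (hM : 0 < M)
    (v : ℝ → ℝ)
    (hv : ∀ x ∈ Set.Icc (0:ℝ) 1, ∀ y ∈ Set.Icc (0:ℝ) 1,
      |v x - v y| ≤ M * |x - y| ^ (a - 1))
    (g : ℝ → ℝ) (hgdef : ∀ x : ℝ, g x = ∫ s in (0:ℝ)..x, v s)
    (c δ h : ℝ) (hc : 0 < c) (hδ : 0 < δ)
    (hh : h = c * δ ^ (1 / a)) (hh2 : h ≤ 1 / 2)
    (gδ : ℝ → ℝ) (hgδ : ∀ x ∈ Set.Icc (0:ℝ) 1, |gδ x - g x| ≤ δ)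
    (R : ℝ → ℝ)
    (hR : ∀ x : ℝ, R x =
      if x < h then (gδ (x + h) - gδ x) / h
      else if x ≤ 1 - h then (gδ (x + h) - gδ (x - h)) / (2 * h)
      else (gδ x - gδ (x - h)) / h) :
    (∀ x ∈ Set.Icc (0:ℝ) 1, |R x - v x| ≤ 2 * δ / h + M * h ^ (a - 1)) ∧
    2 * δ / h + M * h ^ (a - 1) = (2 / c + M * c ^ (a - 1)) * δ ^ (1 - 1 / a) ∧
    Filter.Tendsto (fun t : ℝ => (2 / c + M * c ^ (a - 1)) * t ^ (1 - 1 / a))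
      (nhdsWithin 0 (Set.Ioi 0)) (nhds 0) := by
  have haa : (0:ℝ) < a - 1 := by linarith
  have hδa : (0:ℝ) < δ ^ (1/a) := Real.rpow_pos_of_pos hδ _
  have hhpos : 0 < h := by rw [hh]; positivity
  -- continuity of v on [0,1]
  have hcont : ContinuousOn v (Icc 0 1) := by
    intro x hx
    rw [Metric.continuousWithinAt_iff]
    intro ε hε
    refine ⟨(ε / (M + 1)) ^ (1 / (a - 1)), by positivity, ?_⟩
    intro y hy hdist
    have h1 : dist (v y) (v x) ≤ M * |y - x| ^ (a - 1) := by
      rw [Real.dist_eq]; exact hv y hy x hx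
    have h2 : |y - x| ^ (a - 1) < ε / (M + 1) := by
      have := Real.rpow_lt_rpow (abs_nonneg (y - x)) (by rwa [Real.dist_eq] at hdist) haa
      rwa [← Real.rpow_mul (by positivity), one_div_mul_cancel haa.ne', Real.rpow_one] at this
    calc dist (v y) (v x) ≤ M * |y - x| ^ (a - 1) := h1
      _ < M * (ε / (M + 1)) := by exact mul_lt_mul_of_pos_left h2 hM
      _ = M * ε / (M + 1) := by ring
      _ ≤ ε := by rw [div_le_iff₀ (by linarith)]; nlinarith
  -- key estimate
  have key : ∀ p q x : ℝ, 0 ≤ p → q ≤ 1 → p < q → x ∈ Icc (0:ℝ) 1 →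
      (∀ s ∈ Icc p q, |s - x| ≤ h) →
      |(gδ q - gδ p) / (q - p) - v x| ≤ 2 * δ / (q - p) + M * h ^ (a - 1) := by
    intro p q x hp hq hpq hx hdist
    have hqp : (0:ℝ) < q - p := by linarith
    have hsub : Set.uIcc p q ⊆ Icc (0:ℝ) 1 := by
      rw [uIcc_of_le hpq.le]; exact Icc_subset_Icc hp hq
    have hint2 : IntervalIntegrable v MeasureTheory.volume p q :=
      (hcont.mono hsub).intervalIntegrable
    have hint1 : IntervalIntegrable v MeasureTheory.volume 0 p :=
      (hcont.mono (by rw [uIcc_of_le hp]; exact Icc_subset_Icc le_rfl (by linarith))).intervalIntegrable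
    have hg : g q - g p = ∫ s in p..q, v s := by
      rw [hgdef, hgdef, ← intervalIntegral.integral_add_adjacent_intervals hint1 hint2]
      ring
    have hIb : |(∫ s in p..q, v s) - (q - p) * v x| ≤ M * h ^ (a - 1) * (q - p) := by
      have heq : (∫ s in p..q, v s) - (q - p) * v x = ∫ s in p..q, (v s - v x) := by
        rw [intervalIntegral.integral_sub hint2 (intervalIntegrable_const),
          intervalIntegral.integral_const, smul_eq_mul]
      rw [heq]
      have hb := intervalIntegral.norm_integral_le_of_norm_le_const
        (C := M * h ^ (a - 1)) (f := fun s => v s - v x) (a := p) (b := q) ?_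
      · rw [Real.norm_eq_abs] at hb
        rw [abs_of_pos hqp] at hb
        exact hb
      · intro s hs
        have hs' : s ∈ Icc p q := by
          rw [uIoc_of_le hpq.le] at hs; exact Ioc_subset_Icc_self hs
        have h1 : |v s - v x| ≤ M * |s - x| ^ (a - 1) :=
          hv s ⟨by linarith [hs'.1], by linarith [hs'.2]⟩ x hx
        have h2 : |s - x| ^ (a - 1) ≤ h ^ (a - 1) :=
          Real.rpow_le_rpow (abs_nonneg _) (hdist s hs') haa.le
        calc ‖v s - v x‖ = |v s - v x| := rfl
          _ ≤ M * |s - x| ^ (a - 1) := h1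
          _ ≤ M * h ^ (a - 1) := by nlinarith
    have heq2 : (gδ q - gδ p) / (q - p) - v x
        = ((gδ q - g q) - (gδ p - g p) + ((∫ s in p..q, v s) - (q - p) * v x)) / (q - p) := by
      rw [← hg]; field_simp; ring
    have htri : |(gδ q - g q) - (gδ p - g p) + ((∫ s in p..q, v s) - (q - p) * v x)|
        ≤ |gδ q - g q| + |gδ p - g p| + |(∫ s in p..q, v s) - (q - p) * v x| := by
      have := abs_add_three (gδ q - g q) (-(gδ p - g p)) ((∫ s in p..q, v s) - (q - p) * v x)
      rw [abs_neg] at this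
      calc |(gδ q - g q) - (gδ p - g p) + ((∫ s in p..q, v s) - (q - p) * v x)|
          = |(gδ q - g q) + -(gδ p - g p) + ((∫ s in p..q, v s) - (q - p) * v x)| := by ring_nf
        _ ≤ _ := this
    have hq' : q ∈ Icc (0:ℝ) 1 := ⟨by linarith, hq⟩
    have hp' : p ∈ Icc (0:ℝ) 1 := ⟨hp, by linarith⟩
    calc |(gδ q - gδ p) / (q - p) - v x|
        = |(gδ q - g q) - (gδ p - g p) + ((∫ s in p..q, v s) - (q - p) * v x)| / (q - p) := by
          rw [heq2, abs_div, abs_of_pos hqp]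
      _ ≤ (δ + δ + M * h ^ (a - 1) * (q - p)) / (q - p) := by
          rw [div_le_div_iff_of_pos_right hqp]
          calc _ ≤ |gδ q - g q| + |gδ p - g p| + |(∫ s in p..q, v s) - (q - p) * v x| := htri
            _ ≤ δ + δ + M * h ^ (a - 1) * (q - p) :=
                add_le_add (add_le_add (hgδ q hq') (hgδ p hp')) hIb
      _ = 2 * δ / (q - p) + M * h ^ (a - 1) := by field_simp; ring
  refine ⟨?_, ?_, ?_⟩
  · intro x hx
    rw [hR x]
    by_cases h1 : x < h
    · rw [if_pos h1]
      have hk := key x (x + h) x hx.1 (by linarith) (by linarith) hx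
        (fun s hs => abs_le.2 ⟨by linarith [hs.1], by linarith [hs.2]⟩)
      simpa using hk
    · rw [if_neg h1]
      push_neg at h1
      by_cases h2 : x ≤ 1 - h
      · rw [if_pos h2]
        have hk := key (x - h) (x + h) x (by linarith) (by linarith) (by linarith) hx
          (fun s hs => abs_le.2 ⟨by linarith [hs.1], by linarith [hs.2]⟩)
        have e : x + h - (x - h) = 2 * h := by ring
        rw [e] at hk
        refine hk.trans ?_
        have hle : 2 * δ / (2 * h) ≤ 2 * δ / h :=
          div_le_div_of_nonneg_left (by positivity) hhpos (by linarith)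
        linarith
      · rw [if_neg h2]
        push_neg at h2
        have hk := key (x - h) x x (by linarith) hx.2 (by linarith) hx
          (fun s hs => abs_le.2 ⟨by linarith [hs.1], by linarith [hs.2]⟩)
        simpa using hk
  · have e1 : (1:ℝ)/a * (a - 1) = 1 - 1/a := by field_simp
    have e3 : δ ^ (1 - 1/a) = δ / δ ^ (1/a) := by
      rw [Real.rpow_sub hδ, Real.rpow_one]
    have hha : h ^ (a - 1) = c ^ (a - 1) * δ ^ (1 - 1/a) := by
      rw [hh, Real.mul_rpow hc.le hδa.le, ← Real.rpow_mul hδ.le, e1]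
    rw [hha, hh, e3]
    field_simp
  · have hp : (0:ℝ) < 1 - 1/a := by
      have : 1/a < 1 := by rw [div_lt_one (by linarith)]; linarith
      linarith
    have ht : Tendsto (fun t : ℝ => t ^ (1 - 1/a)) (nhds 0) (nhds 0) := by
      have h0 : (0:ℝ) ^ (1 - 1/a) = 0 := Real.zero_rpow hp.ne'
      have := (Real.continuousAt_rpow_const 0 (1 - 1/a) (Or.inr hp.le)).tendsto
      rwa [h0] at this
    have h2 := (ht.const_mul (2 / c + M * c ^ (a - 1))).mono_left
      (nhdsWithin_le_nhds (s := Set.Ioi (0:ℝ)))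
    simpa using h2
end

section
/- Let α ∈ (0,1] and M > 0, let v : [0,1] → ℝ be differentiable with derivative v′ satisfying |v′(x) − v′(y)| ≤ M|x − y|^{α} for all x, y ∈ [0,1], and let g(x) := ∫_0^x v(s) ds. Then for every h with 0 < h ≤ 1/2 and every x ∈ [h, 1 − h], |(g(x+h) − g(x−h))/(2h) − v(x)| ≤ M·h^{1+α}/((1 + α)(2 + α)). -/
/-!
Write the central difference as `(2h)⁻¹ ∫₀ʰ (v (x + t) + v (x - t) - 2 v x) dt`. In the
symmetric second difference `r t = v (x + t) + v (x - t) - 2 v x` the linear Taylor term has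
cancelled: `r 0 = 0` and `|r' t| = |v' (x + t) - v' (x - t)| ≤ 2 M tᵅ` by Hölder continuity of
`v'` at `x`. Comparing `r` with `2 M t^(α+1) / (α+1)` and integrating once more gives the
order `h^(1+α)`.
-/

open Set intervalIntegral
open MeasureTheory (volume)

section

variable {E : Type*} [NormedAddCommGroup E] [NormedSpace ℝ E]

theorem norm_le_rpow_of_norm_deriv_le_rpow {f f' : ℝ → E} {C α b : ℝ} (hα : 0 ≤ α)
    (hf : ContinuousOn f (Icc 0 b))
    (hf' : ∀ t ∈ Ico 0 b, HasDerivWithinAt f (f' t) (Ici t) t) (hf0 : f 0 = 0)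
    (bound : ∀ t ∈ Ico 0 b, ‖f' t‖ ≤ C * t ^ α) :
    ∀ t ∈ Icc 0 b, ‖f t‖ ≤ C * t ^ (α + 1) / (α + 1) := by
  refine image_norm_le_of_norm_deriv_right_le_deriv_boundary hf hf' ?_ (fun t => ?_) bound
  · simp [hf0, Real.zero_rpow (by positivity : α + 1 ≠ 0)]
  · refine (((Real.hasDerivAt_rpow_const (Or.inr (by linarith))).const_mul C).div_const
      (α + 1)).congr_deriv ?_
    rw [add_sub_cancel_right]
    field_simp

theorem norm_integral_le_of_norm_deriv_le_rpow {f f' : ℝ → E} {C α b : ℝ} (hα : 0 ≤ α)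
    (hb : 0 ≤ b) (hf : ContinuousOn f (Icc 0 b))
    (hf' : ∀ t ∈ Ico 0 b, HasDerivWithinAt f (f' t) (Ici t) t) (hf0 : f 0 = 0)
    (bound : ∀ t ∈ Ico 0 b, ‖f' t‖ ≤ C * t ^ α) :
    ‖∫ t in 0..b, f t‖ ≤ C * b ^ (α + 2) / ((α + 1) * (α + 2)) := by
  have hpoint := norm_le_rpow_of_norm_deriv_le_rpow hα hf hf' hf0 bound
  calc ‖∫ t in 0..b, f t‖ ≤ ∫ t in 0..b, C * t ^ (α + 1) / (α + 1) :=
        norm_integral_le_of_norm_le hb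
          (Filter.Eventually.of_forall fun t ht => hpoint t (Ioc_subset_Icc_self ht))
          (by apply Continuous.intervalIntegrable; fun_prop (disch := positivity))
    _ = C * b ^ (α + 2) / ((α + 1) * (α + 2)) := by
        rw [integral_div, integral_const_mul, integral_rpow (Or.inl (by linarith)),
          Real.zero_rpow (by positivity), add_assoc, one_add_one_eq_two, sub_zero]
        field_simp

theorem integral_sub_add_eq_integral_comp_add_add_comp_sub {f : ℝ → E} {x h : ℝ}
    (hf : IntervalIntegrable f volume (x - h) (x + h)) :
    ∫ s in (x - h)..(x + h), f s = ∫ t in 0..h, (f (x + t) + f (x - t)) := by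
  have hx : x ∈ uIcc (x - h) (x + h) := by
    rw [mem_uIcc]
    rcases le_total 0 h with h0 | h0
    · exact .inl ⟨by linarith, by linarith⟩
    · exact .inr ⟨by linarith, by linarith⟩
  have hleft : IntervalIntegrable f volume (x - h) x := hf.mono_set (uIcc_subset_uIcc_left hx)
  have hright : IntervalIntegrable f volume x (x + h) := hf.mono_set (uIcc_subset_uIcc_right hx)
  rw [integral_add (by simpa using hright.comp_add_left x)
      (by simpa using (hleft.comp_sub_left x).symm),
    integral_comp_add_left, integral_comp_sub_left, add_zero, sub_zero,
    ← integral_add_adjacent_intervals hleft hright, add_comm]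

end

theorem abs_integral_div_sub_le_of_hoelder_deriv {v v' : ℝ → ℝ} {C α x h : ℝ} (hα : 0 ≤ α)
    (hh : 0 < h) (hv : ContinuousOn v (Icc (x - h) (x + h)))
    (hv' : ∀ y ∈ Ioo (x - h) (x + h), HasDerivAt v (v' y) y)
    (hoelder : ∀ y ∈ Ioo (x - h) (x + h), |v' y - v' x| ≤ C * |y - x| ^ α) :
    |(∫ s in (x - h)..(x + h), v s) / (2 * h) - v x| ≤
      C * h ^ (1 + α) / ((1 + α) * (2 + α)) := by
  have hsum : ContinuousOn (fun t => v (x + t) + v (x - t)) (Icc 0 h) := by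
    refine (hv.comp (continuous_const_add x).continuousOn fun t ht => ?_).add
      (hv.comp (continuous_sub_left x).continuousOn fun t ht => ?_) <;>
    exact ⟨by linarith [ht.1, ht.2], by linarith [ht.1, ht.2]⟩
  set r : ℝ → ℝ := fun t => v (x + t) + v (x - t) - 2 * v x
  have hr : ContinuousOn r (Icc 0 h) := hsum.sub continuousOn_const
  have hr' : ∀ t ∈ Ico 0 h, HasDerivWithinAt r (v' (x + t) - v' (x - t)) (Ici t) t := by
    intro t ⟨ht0, hth⟩
    have hplus := (hv' (x + t) ⟨by linarith, by linarith⟩).comp_const_add x t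
    have hminus := (hv' (x - t) ⟨by linarith, by linarith⟩).comp_const_sub x t
    exact ((hplus.add hminus).sub_const (2 * v x)).hasDerivWithinAt
  have hbound : ∀ t ∈ Ico 0 h, ‖v' (x + t) - v' (x - t)‖ ≤ 2 * C * t ^ α := by
    intro t ⟨ht0, hth⟩
    have hplus := hoelder (x + t) ⟨by linarith, by linarith⟩
    have hminus := hoelder (x - t) ⟨by linarith, by linarith⟩
    rw [add_sub_cancel_left, abs_of_nonneg ht0] at hplus
    rw [sub_sub_cancel_left, abs_neg, abs_of_nonneg ht0, abs_sub_comm] at hminus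
    rw [Real.norm_eq_abs]
    linarith [abs_sub_le (v' (x + t)) (v' x) (v' (x - t))]
  have hint := norm_integral_le_of_norm_deriv_le_rpow hα hh.le hr hr' (by simp [r]; ring) hbound
  have hsplit :
      (∫ s in (x - h)..(x + h), v s) / (2 * h) - v x = (∫ t in 0..h, r t) / (2 * h) := by
    rw [integral_sub_add_eq_integral_comp_add_add_comp_sub
        (hv.intervalIntegrable_of_Icc (by linarith)),
      integral_sub (hsum.intervalIntegrable_of_Icc hh.le) intervalIntegrable_const, integral_const]
    field_simp
    simp only [sub_zero, smul_eq_mul, sub_right_inj]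
    ring
  have h2h : 0 < 2 * h := by positivity
  rw [hsplit, abs_div, abs_of_pos h2h, div_le_iff₀ h2h]
  calc |∫ t in 0..h, r t| ≤ 2 * C * h ^ (α + 2) / ((α + 1) * (α + 2)) := hint
    _ = C * h ^ (1 + α) / ((1 + α) * (2 + α)) * (2 * h) := by
      rw [show α + 2 = (1 + α) + 1 by ring, Real.rpow_add_one hh.ne']
      ring

theorem central_difference_improved_bound_general
    (α M : ℝ) (hα0 : 0 < α)
    (v v' : ℝ → ℝ)
    (hdiff : ∀ x ∈ Set.Icc (0:ℝ) 1, HasDerivWithinAt v (v' x) (Set.Icc (0:ℝ) 1) x)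
    (hv' : ∀ x ∈ Set.Icc (0:ℝ) 1, ∀ y ∈ Set.Icc (0:ℝ) 1,
      |v' x - v' y| ≤ M * |x - y| ^ α)
    (g : ℝ → ℝ) (hgdef : ∀ x : ℝ, g x = ∫ s in (0:ℝ)..x, v s) :
    ∀ h : ℝ, 0 < h → h ≤ 1 / 2 → ∀ x ∈ Set.Icc h (1 - h),
      |(g (x + h) - g (x - h)) / (2 * h) - v x| ≤
        M * h ^ (1 + α) / ((1 + α) * (2 + α)) := by
  intro h hh _ x ⟨hxh, hxh'⟩
  have hsub : Icc (x - h) (x + h) ⊆ Icc 0 1 := Icc_subset_Icc (by linarith) (by linarith)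
  have hv : ContinuousOn v (Icc 0 1) := fun y hy => (hdiff y hy).continuousWithinAt
  have hx : x ∈ Icc (0:ℝ) 1 := hsub ⟨by linarith, by linarith⟩
  have hvi : ∀ b ∈ Icc (0:ℝ) 1, IntervalIntegrable v volume 0 b := fun b hb =>
    (hv.mono (uIcc_subset_Icc (left_mem_Icc.2 zero_le_one) hb)).intervalIntegrable
  rw [hgdef, hgdef, integral_interval_sub_left (hvi _ (hsub (right_mem_Icc.2 (by linarith))))
    (hvi _ (hsub (left_mem_Icc.2 (by linarith))))]
  refine abs_integral_div_sub_le_of_hoelder_deriv hα0.le hh (hv.mono hsub) (fun y hy => ?_)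
    (fun y hy => hv' y (hsub (Ioo_subset_Icc_self hy)) x hx)
  exact (hdiff y (hsub (Ioo_subset_Icc_self hy))).hasDerivAt
    (Icc_mem_nhds (by linarith [hy.1]) (by linarith [hy.2]))

/-- **Improved interior accuracy for `a = 1 + α ∈ (1,2]`.** If `v` is differentiable
on `[0,1]` with derivative `v'` Hölder continuous with exponent `α ∈ (0,1]` and
constant `M`, and `g x = ∫_0^x v`, then for `0 < h ≤ 1/2` and `x ∈ [h, 1-h]`,
`|(g(x+h) - g(x-h))/(2h) - v x| ≤ M·h^(1+α)/((1+α)(2+α))`. -/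
theorem central_difference_improved_bound
    (α M : ℝ) (hα0 : 0 < α) (hα1 : α ≤ 1) (hM : 0 < M)
    (v v' : ℝ → ℝ)
    (hdiff : ∀ x ∈ Set.Icc (0:ℝ) 1, HasDerivWithinAt v (v' x) (Set.Icc (0:ℝ) 1) x)
    (hv' : ∀ x ∈ Set.Icc (0:ℝ) 1, ∀ y ∈ Set.Icc (0:ℝ) 1,
      |v' x - v' y| ≤ M * |x - y| ^ α)
    (g : ℝ → ℝ) (hgdef : ∀ x : ℝ, g x = ∫ s in (0:ℝ)..x, v s) :
    ∀ h : ℝ, 0 < h → h ≤ 1 / 2 → ∀ x ∈ Set.Icc h (1 - h),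
      |(g (x + h) - g (x - h)) / (2 * h) - v x| ≤
        M * h ^ (1 + α) / ((1 + α) * (2 + α)) :=
  central_difference_improved_bound_general α M hα0 v v' hdiff hv' g hgdef
end
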